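/- For η ∈ (0,1), the Gaussian reverse coherent information of a TMSV of mean photon number μ through a pure loss channel of transmissivity η, given by I_R(μ) = g(2μ+1) − g(2(1−η)μ+1) with g(x) = ((x+1)/2)log₂((x+1)/2) − ((x−1)/2)log₂((x−1)/2), converges to −log₂(1−η) as μ → ∞. -/

import Mathlib

noncomputable def thermalEntropy (x : ℝ) : ℝ :=
  ((x + 1) / 2) * Real.logb 2 ((x + 1) / 2) - ((x - 1) / 2) * Real.logb 2 ((x - 1) / 2)

/-!
Writing `x = 2t + 1`, `g(x) = (t + 1) log₂ (t + 1) - t log₂ t = log₂ t + (t + 1) log₂ (1 + 1/t)`,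
and `(t + 1) log (1 + 1/t) → 1`; so `g(2t + 1) = log₂ t + log₂ e + o(1)`. The constants `log₂ e`
cancel in the difference, leaving `log₂ μ - log₂ ((1 - η) μ) = -log₂ (1 - η)`.
-/

open Filter Topology Real

lemma thermalEntropy_two_mul_add_one_sub_logb {t : ℝ} (ht : 0 < t) :
    thermalEntropy (2 * t + 1) - logb 2 t = (t + 1) * log (1 + t⁻¹) / log 2 := by
  have hlog : log (1 + t⁻¹) = log (t + 1) - log t := by
    rw [← log_div (by positivity) ht.ne', add_div, div_self ht.ne', one_div]
  rw [thermalEntropy, show (2 * t + 1 + 1) / 2 = t + 1 by ring,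
    show (2 * t + 1 - 1) / 2 = t by ring, hlog]
  simp only [logb]
  ring

lemma tendsto_add_one_mul_log_one_add_inv :
    Tendsto (fun t : ℝ => (t + 1) * log (1 + t⁻¹)) atTop (𝓝 1) := by
  have hmul : Tendsto (fun t : ℝ => t * log (1 + t⁻¹)) atTop (𝓝 1) := by
    simpa only [one_div] using tendsto_mul_log_one_add_div_atTop 1
  have hlog : Tendsto (fun t : ℝ => log (1 + t⁻¹)) atTop (𝓝 0) := by
    simpa only [add_zero, log_one] using
      (tendsto_inv_atTop_zero.const_add (1 : ℝ)).log (by norm_num)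
  simpa only [add_mul, one_mul, add_zero] using hmul.add hlog

lemma tendsto_thermalEntropy_two_mul_add_one_sub_logb :
    Tendsto (fun t : ℝ => thermalEntropy (2 * t + 1) - logb 2 t) atTop (𝓝 (1 / log 2)) := by
  refine (tendsto_add_one_mul_log_one_add_inv.div_const (log 2)).congr' ?_
  filter_upwards [eventually_gt_atTop 0] with t ht
  exact (thermalEntropy_two_mul_add_one_sub_logb ht).symm

theorem gaussian_rci_limit (η : ℝ) (hη : η ∈ Set.Ioo (0 : ℝ) 1) :
    Filter.Tendsto
      (fun μ : ℝ => thermalEntropy (2 * μ + 1) - thermalEntropy (2 * (1 - η) * μ + 1))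
      Filter.atTop (nhds (-Real.logb 2 (1 - η))) := by
  have hν : 0 < 1 - η := sub_pos.mpr hη.2
  have hlim := tendsto_thermalEntropy_two_mul_add_one_sub_logb
  have hdiff := (hlim.sub (hlim.comp (tendsto_id.const_mul_atTop hν))).add_const
    (-logb 2 (1 - η))
  rw [sub_self, zero_add] at hdiff
  refine hdiff.congr' ?_
  filter_upwards [eventually_gt_atTop 0] with μ hμ
  simp only [Function.comp_apply, id, ← mul_assoc, logb_mul hν.ne' hμ.ne']
  ring
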